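/- For n = 4 with values v_1 < v_2 < v_3 < v_4, there are exactly 6 circuits, and the 7 points listed in the dimension proof construction (the circuits corresponding to v_1 followed by cyclic permutations of v_2, v_3, v_4, plus the swap of v_3 and v_4) contain 4 affinely independent circuits, so H_4(v) has dimension 3. -/

import Mathlib

/-!
Circuits are the points `v ∘ σ` for the `4`-cycles `σ`, so there are `3! = 6` of them. They all
have coordinate sum `∑ vᵢ`, so they span an affine space of dimension at most `3`. Conversely,
the circuits for `(0 1 2 3), (0 1 3 2), (0 2 3 1), (0 3 2 1)` are affinely independent: the minor
of their difference vectors on the coordinates `0, 1, 3` has determinant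
`(v₁ - v₀)(v₃ - v₂)(v₂ - v₀ + v₃ - v₁) > 0`.
-/

/-- A circuit on `{1,...,n}`: a permutation of `Fin n` that is a single `n`-cycle. -/
def IsCircuitPerm {n : ℕ} (σ : Equiv.Perm (Fin n)) : Prop :=
  σ.IsCycle ∧ σ.support = Finset.univ

/-- A circuit point on values `v`: `x i = v (σ i)` for some single-`n`-cycle permutation `σ`. -/
def IsCircuitPt {n : ℕ} (v : Fin n → ℝ) (x : Fin n → ℝ) : Prop :=
  ∃ σ : Equiv.Perm (Fin n), IsCircuitPerm σ ∧ ∀ i, x i = v (σ i)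

open Equiv Finset Module
open scoped Nat

lemma vectorSpan_convexHull {𝕜 E : Type*} [Ring 𝕜] [PartialOrder 𝕜] [AddCommGroup E]
    [Module 𝕜 E] (s : Set E) : vectorSpan 𝕜 (convexHull 𝕜 s) = vectorSpan 𝕜 s := by
  rw [← direction_affineSpan, ← direction_affineSpan, affineSpan_convexHull]

lemma finrank_vectorSpan_lt_of_sum_eq {K ι : Type*} [Field K] [Fintype ι] [Nonempty ι]
    {s : Set (ι → K)} {c : K} (hs : ∀ x ∈ s, ∑ i, x i = c) :
    finrank K (vectorSpan K s) < Fintype.card ι := by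
  classical
  let f : Dual K (ι → K) := ∑ i, LinearMap.proj i
  have hf : ∀ x, f x = ∑ i, x i := fun x => by simp [f]
  have hf_ne : f ≠ 0 := by
    obtain ⟨i⟩ := ‹Nonempty ι›
    intro h
    simpa [hf] using LinearMap.congr_fun h (Pi.single i 1)
  have hle : vectorSpan K s ≤ LinearMap.ker f := by
    rw [vectorSpan_def, Submodule.span_le]
    rintro _ ⟨x, hx, y, hy, rfl⟩
    simp [hf, hs x hx, hs y hy]
  calc finrank K (vectorSpan K s) ≤ finrank K (LinearMap.ker f) := Submodule.finrank_mono hle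
    _ < finrank K (ι → K) := by rw [← Dual.finrank_ker_add_one_of_ne_zero hf_ne]; omega
    _ = Fintype.card ι := finrank_fintype_fun_eq_card K

lemma affineIndependent_of_det_ne_zero {K ι : Type*} [CommRing K] [IsDomain K] {m : ℕ}
    (p : Fin (m + 1) → ι → K) (f : Fin m → ι)
    (h : (Matrix.of fun i j => p i.succ (f j) - p 0 (f j)).det ≠ 0) :
    AffineIndependent K p := by
  rw [affineIndependent_iff_linearIndependent_vsub K p 0,
    ← linearIndependent_equiv (finSuccAboveEquiv 0)]
  refine LinearIndependent.of_comp (LinearMap.funLeft K K f) ?_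
  have hrows : LinearMap.funLeft K K f ∘ (fun i : {x // x ≠ 0} => p i -ᵥ p 0) ∘
      finSuccAboveEquiv 0 = (Matrix.of fun i j => p i.succ (f j) - p 0 (f j)).row := by
    ext i j
    simp [finSuccAboveEquiv_apply]
  rw [hrows]
  exact Matrix.linearIndependent_rows_of_det_ne_zero h

lemma isCircuitPerm_iff_cycleType {n : ℕ} (σ : Perm (Fin n)) :
    IsCircuitPerm σ ↔ σ.cycleType = {n} := by
  constructor
  · rintro ⟨hσ, hsupp⟩
    rw [hσ.cycleType, hsupp, card_univ, Fintype.card_fin]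
  · intro h
    refine ⟨Perm.card_cycleType_eq_one.mp (by simp [h]), eq_univ_of_card _ ?_⟩
    rw [← Perm.sum_cycleType, h]
    simp

lemma ncard_setOf_isCircuitPerm {n : ℕ} (hn : 2 ≤ n) :
    {σ : Perm (Fin n) | IsCircuitPerm σ}.ncard = (n - 1)! := by
  simp_rw [isCircuitPerm_iff_cycleType]
  rw [← coe_filter_univ, Set.ncard_coe_finset,
    Perm.card_of_cycleType_singleton hn (by simp)]
  simp

lemma setOf_isCircuitPt_eq_image {n : ℕ} (v : Fin n → ℝ) :
    {x | IsCircuitPt v x} = (fun σ : Perm (Fin n) => v ∘ σ) '' {σ | IsCircuitPerm σ} := by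
  ext x
  simp [IsCircuitPt, funext_iff, eq_comm]

lemma ncard_setOf_isCircuitPt {n : ℕ} {v : Fin n → ℝ} (hv : Function.Injective v)
    (hn : 2 ≤ n) : {x | IsCircuitPt v x}.ncard = (n - 1)! := by
  rw [setOf_isCircuitPt_eq_image,
    Set.ncard_image_of_injective _ fun σ τ h => DFunLike.coe_injective (hv.comp_left h),
    ncard_setOf_isCircuitPerm hn]

lemma IsCircuitPt.sum_eq {n : ℕ} {v x : Fin n → ℝ} (hx : IsCircuitPt v x) :
    ∑ i, x i = ∑ i, v i := by
  obtain ⟨σ, -, hσ⟩ := hx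
  simp_rw [hσ]
  exact Equiv.sum_comp σ v

def framePerm : Fin 4 → Perm (Fin 4) :=
  ![c[0, 1, 2, 3], c[0, 1, 3, 2], c[0, 2, 3, 1], c[0, 3, 2, 1]]

lemma isCircuitPerm_framePerm (i : Fin 4) : IsCircuitPerm (framePerm i) := by
  rw [isCircuitPerm_iff_cycleType]
  revert i
  decide

lemma affineIndependent_framePerm {v : Fin 4 → ℝ} (hv : StrictMono v) :
    AffineIndependent ℝ fun i => v ∘ framePerm i := by
  refine affineIndependent_of_det_ne_zero _ ![0, 1, 3] ?_
  have hminor : (Matrix.of fun i j =>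
      v (framePerm i.succ (![0, 1, 3] j)) - v (framePerm 0 (![0, 1, 3] j))) =
      !![v 1 - v 1, v 3 - v 2, v 2 - v 0;
         v 2 - v 1, v 0 - v 2, v 1 - v 0;
         v 3 - v 1, v 0 - v 2, v 2 - v 0] := by
    ext i j
    fin_cases i <;> fin_cases j <;> rfl
  have hdet : (!![v 1 - v 1, v 3 - v 2, v 2 - v 0;
      v 2 - v 1, v 0 - v 2, v 1 - v 0;
      v 3 - v 1, v 0 - v 2, v 2 - v 0]).det =
      (v 1 - v 0) * (v 3 - v 2) * ((v 2 - v 0) + (v 3 - v 1)) := by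
    rw [Matrix.det_fin_three]
    simp
    ring
  have h01 : v 0 < v 1 := hv (by decide)
  have h12 : v 1 < v 2 := hv (by decide)
  have h23 : v 2 < v 3 := hv (by decide)
  simp only [Function.comp_apply]
  rw [hminor, hdet]
  exact (mul_pos (mul_pos (by linarith) (by linarith)) (by linarith)).ne'

/-- For `n = 4` with values `v_1 < v_2 < v_3 < v_4`, there are exactly 6 circuits,
there exist 4 affinely independent circuits, and hence `H_4(v)` has dimension 3. -/
theorem stmt_18 (v : Fin 4 → ℝ) (hv : StrictMono v) :
    Set.ncard {x : Fin 4 → ℝ | IsCircuitPt v x} = 6 ∧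
    (∃ p : Fin 4 → (Fin 4 → ℝ), AffineIndependent ℝ p ∧ ∀ i, IsCircuitPt v (p i)) ∧
    Module.finrank ℝ
        (vectorSpan ℝ (convexHull ℝ {x : Fin 4 → ℝ | IsCircuitPt v x})) = 3 := by
  have hframe : ∀ i, IsCircuitPt v (v ∘ framePerm i) :=
    fun i => ⟨framePerm i, isCircuitPerm_framePerm i, fun _ => rfl⟩
  have hindep := affineIndependent_framePerm hv
  refine ⟨ncard_setOf_isCircuitPt hv.injective (by norm_num), ⟨_, hindep, hframe⟩, ?_⟩
  rw [vectorSpan_convexHull]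
  apply le_antisymm
  · exact Nat.le_of_lt_succ <| (finrank_vectorSpan_lt_of_sum_eq (s := {x | IsCircuitPt v x})
      fun _ hx => hx.sum_eq).trans_eq (Fintype.card_fin 4)
  · calc 3 = finrank ℝ (vectorSpan ℝ (Set.range fun i => v ∘ framePerm i)) :=
          (hindep.finrank_vectorSpan (by simp)).symm
      _ ≤ _ := Submodule.finrank_mono (vectorSpan_mono ℝ (Set.range_subset_iff.2 hframe))
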